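/- arXiv:2511.05975 — 7 statements merged into one kernel-verified Lean document; each statement's English description precedes it below -/
import Mathlib

section
/- For a contrast bi-form ϖ on M with induced metric g^ϖ = ι^* ϖ and induced connection ∇^ϖ defined by g^ϖ(∇^ϖ_Z X, Y) = ι^*(L_{Z^L}(ϖ(X|Y))), the pullback of the left differential along the diagonal embedding computes the torsion: (ι^* d^L ϖ)(X_0, X_1, Y) = g^ϖ(Tor^{∇^ϖ}(X_0, X_1), Y) for all vector fields X_0, X_1, Y on M. -/
/-!
We model the manifold `M` as a (chart-free) normed space `E`; vector fields are maps
`E → E` and a `(1,1)`-bi-form on `M` is given pointwise: at `(m,n) ∈ M × M` it pairs a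
tangent vector at `m` (left slot) with a tangent vector at `n` (right slot).
-/

noncomputable section

variable {E : Type*} [NormedAddCommGroup E] [NormedSpace ℝ E]

/-- A `(1,1)`-bi-form on `M = E`. -/
abbrev BiForm11 (E : Type*) [NormedAddCommGroup E] [NormedSpace ℝ E] :=
  E × E → E →L[ℝ] E →L[ℝ] ℝ

/-- The pairing `ϖ(X|Y)` of a `(1,1)`-bi-form with two vector fields. -/
def pair (ϖ : BiForm11 E) (X Y : E → E) : E × E → ℝ := fun z => ϖ z (X z.1) (Y z.2)

/-- Lie derivative of a function on `M × M` along the `π_L`-horizontal lift `(X,0)`. -/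
def lieL (X : E → E) (f : E × E → ℝ) : E × E → ℝ := fun z => fderiv ℝ f z (X z.1, 0)

/-- The Lie bracket of vector fields on `M`. -/
def lieBr (X Y : E → E) : E → E := fun m => fderiv ℝ Y m (X m) - fderiv ℝ X m (Y m)

/-- The pullback `ι^* ϖ` along the diagonal embedding `ι(m) = (m,m)`, a `2`-covariant
tensor on `M`. -/
def gOf (ϖ : BiForm11 E) : E → E →L[ℝ] E →L[ℝ] ℝ := fun m => ϖ (m, m)

/-- The torsion tensor of a connection: `Tor(X,Y) = ∇_X Y − ∇_Y X − [X,Y]`. -/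
def tor (D : (E → E) → (E → E) → E → E) (X Y : E → E) : E → E :=
  fun m => D X Y m - D Y X m - lieBr X Y m

/-- The left differential of a `(1,1)`-bi-form, paired with vector fields:
`(d^L ϖ)(X₀,X₁|Y) = L_{X₀^L}(ϖ(X₁|Y)) − L_{X₁^L}(ϖ(X₀|Y)) − ϖ([X₀,X₁]|Y)`. -/
def dL11 (ϖ : BiForm11 E) (X₀ X₁ Y : E → E) : E × E → ℝ :=
  lieL X₀ (pair ϖ X₁ Y) - lieL X₁ (pair ϖ X₀ Y) - pair ϖ (lieBr X₀ X₁) Y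

/-- The pullback of a `(1,1)`-bi-form along the swap map `s(m,n) = (n,m)`:
`(s^*ϖ)(m,n)(v|w) = ϖ(n,m)(w|v)`. -/
def sStar (ϖ : BiForm11 E) : BiForm11 E := fun z => (ϖ (z.2, z.1)).flip

/-- `D` is the affine connection induced by the contrast bi-form `ϖ`, i.e.
`g^ϖ(∇^ϖ_Z X, Y) = ι^*(L_{Z^L}(ϖ(X|Y)))`. -/
def Induces (ϖ : BiForm11 E) (D : (E → E) → (E → E) → E → E) : Prop :=
  ∀ Z X Y : E → E, ContDiff ℝ (⊤ : ℕ∞) X → ContDiff ℝ (⊤ : ℕ∞) Y → ∀ m : E,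
    gOf ϖ m (D Z X m) (Y m) = fderiv ℝ (pair ϖ X Y) (m, m) (Z m, 0)

/-- for a contrast bi-form `ϖ` with induced metric `g^ϖ = ι^*ϖ` and
induced connection `∇^ϖ`, the diagonal pullback of `d^L ϖ` computes the torsion:
`(ι^* d^L ϖ)(X₀,X₁,Y) = g^ϖ(Tor^{∇^ϖ}(X₀,X₁), Y)`. -/
theorem stmt4 (ϖ : BiForm11 E) (hϖ : ContDiff ℝ (⊤ : ℕ∞) ϖ)
    (hsymm : ∀ (m : E) (v w : E), gOf ϖ m v w = gOf ϖ m w v)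
    (hnd : ∀ (m : E) (v : E), (∀ w, gOf ϖ m v w = 0) → v = 0)
    (D : (E → E) → (E → E) → E → E) (hD : Induces ϖ D) :
    ∀ X₀ X₁ Y : E → E, ContDiff ℝ (⊤ : ℕ∞) X₀ → ContDiff ℝ (⊤ : ℕ∞) X₁ → ContDiff ℝ (⊤ : ℕ∞) Y →
      ∀ m : E, dL11 ϖ X₀ X₁ Y (m, m) = gOf ϖ m (tor D X₀ X₁ m) (Y m) := by
  intro X₀ X₁ Y h₀ h₁ hY m
  have e0 := hD X₀ X₁ Y h₁ hY m
  have e1 := hD X₁ X₀ Y h₀ hY m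
  simp only [dL11, lieL, tor, pair, gOf, Pi.sub_apply] at *
  rw [← e0, ← e1]
  simp [map_sub]
end
end

section
/- Let ϖ be a contrast bi-form on M. The induced connection ∇^ϖ is torsion-free if and only if ι^*(d^L ϖ) = 0. -/
/-!
We model the manifold `M` as a (chart-free) normed space `E`; vector fields are maps
`E → E` and a `(1,1)`-bi-form on `M` is given pointwise: at `(m,n) ∈ M × M` it pairs a
tangent vector at `m` (left slot) with a tangent vector at `n` (right slot).
-/

noncomputable section

variable {E : Type*} [NormedAddCommGroup E] [NormedSpace ℝ E]

/-- the induced connection `∇^ϖ` of a contrast bi-form is torsion-free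
if and only if `ι^*(d^L ϖ) = 0`. -/
theorem stmt5 (ϖ : BiForm11 E) (hϖ : ContDiff ℝ (⊤ : ℕ∞) ϖ)
    (hsymm : ∀ (m : E) (v w : E), gOf ϖ m v w = gOf ϖ m w v)
    (hnd : ∀ (m : E) (v : E), (∀ w, gOf ϖ m v w = 0) → v = 0)
    (D : (E → E) → (E → E) → E → E) (hD : Induces ϖ D) :
    (∀ X Y : E → E, ContDiff ℝ (⊤ : ℕ∞) X → ContDiff ℝ (⊤ : ℕ∞) Y → ∀ m, tor D X Y m = 0)
      ↔ ∀ X₀ X₁ Y : E → E, ContDiff ℝ (⊤ : ℕ∞) X₀ → ContDiff ℝ (⊤ : ℕ∞) X₁ → ContDiff ℝ (⊤ : ℕ∞) Y →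
          ∀ m : E, dL11 ϖ X₀ X₁ Y (m, m) = 0 := by
  have key : ∀ X₀ X₁ Y : E → E, ContDiff ℝ (⊤ : ℕ∞) X₀ → ContDiff ℝ (⊤ : ℕ∞) X₁ → ContDiff ℝ (⊤ : ℕ∞) Y →
      ∀ m : E, dL11 ϖ X₀ X₁ Y (m, m) = gOf ϖ m (tor D X₀ X₁ m) (Y m) := by
    intro X₀ X₁ Y h₀ h₁ hY m
    have e0 : gOf ϖ m (D X₀ X₁ m) (Y m) = fderiv ℝ (pair ϖ X₁ Y) (m, m) (X₀ m, 0) :=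
      hD X₀ X₁ Y h₁ hY m
    have e1 : gOf ϖ m (D X₁ X₀ m) (Y m) = fderiv ℝ (pair ϖ X₀ Y) (m, m) (X₁ m, 0) :=
      hD X₁ X₀ Y h₀ hY m
    simp only [dL11, tor, lieL, pair, gOf, Pi.sub_apply] at *
    rw [← e0, ← e1]
    simp [map_sub]
  constructor
  · intro htor X₀ X₁ Y h₀ h₁ hY m
    rw [key X₀ X₁ Y h₀ h₁ hY m, htor X₀ X₁ h₀ h₁ m]
    simp
  · intro hdl X Y hX hY m
    apply hnd m
    intro w
    have := key X Y (fun _ => w) hX hY contDiff_const m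
    rw [hdl X Y (fun _ => w) hX hY contDiff_const m] at this
    exact this.symm
end
end

section
/- Let ϖ be a contrast bi-form on M. The dual connection ∇^{ϖ†} induced by ϖ† = s^* ϖ is torsion-free if and only if ι^*(d^R ϖ) = 0. -/
/-!
We model the manifold `M` as a (chart-free) normed space `E`; vector fields are maps
`E → E` and a `(1,1)`-bi-form on `M` is given pointwise: at `(m,n) ∈ M × M` it pairs a
tangent vector at `m` (left slot) with a tangent vector at `n` (right slot).
-/

noncomputable section

variable {E : Type*} [NormedAddCommGroup E] [NormedSpace ℝ E]

/-- The right differential of a `(1,1)`-bi-form, paired with vector fields: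
`d^R = s^* ∘ d^L ∘ s^*`, so `(d^R ϖ)(X|Y₀,Y₁) = s^*((d^L (s^*ϖ))(Y₀,Y₁|X))`. -/
def dR11 (ϖ : BiForm11 E) (X Y₀ Y₁ : E → E) : E × E → ℝ :=
  fun z => dL11 (sStar ϖ) Y₀ Y₁ X (z.2, z.1)

lemma key_dR (ϖ : BiForm11 E) (Ddag : (E → E) → (E → E) → E → E)
    (hDdag : Induces (sStar ϖ) Ddag) (X Y₀ Y₁ : E → E)
    (hX : ContDiff ℝ (⊤ : ℕ∞) X) (hY₀ : ContDiff ℝ (⊤ : ℕ∞) Y₀) (hY₁ : ContDiff ℝ (⊤ : ℕ∞) Y₁) (m : E) :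
    dR11 ϖ X Y₀ Y₁ (m, m) = sStar ϖ (m, m) (tor Ddag Y₀ Y₁ m) (X m) := by
  have h1 := hDdag Y₀ Y₁ X hY₁ hX m
  have h2 := hDdag Y₁ Y₀ X hY₀ hX m
  simp only [gOf] at h1 h2
  simp only [dR11, dL11, Pi.sub_apply, lieL, tor, pair]
  rw [← h1, ← h2]
  simp [map_sub]

/-- the dual connection `∇^{ϖ†}` induced by `ϖ† = s^*ϖ` is
torsion-free if and only if `ι^*(d^R ϖ) = 0`. -/
theorem stmt6 [FiniteDimensional ℝ E] (ϖ : BiForm11 E) (hϖ : ContDiff ℝ (⊤ : ℕ∞) ϖ)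
    (hsymm : ∀ (m : E) (v w : E), gOf ϖ m v w = gOf ϖ m w v)
    (hnd : ∀ (m : E) (v : E), (∀ w, gOf ϖ m v w = 0) → v = 0)
    (Ddag : (E → E) → (E → E) → E → E) (hDdag : Induces (sStar ϖ) Ddag) :
    (∀ X Y : E → E, ContDiff ℝ (⊤ : ℕ∞) X → ContDiff ℝ (⊤ : ℕ∞) Y → ∀ m, tor Ddag X Y m = 0)
      ↔ ∀ X Y₀ Y₁ : E → E, ContDiff ℝ (⊤ : ℕ∞) X → ContDiff ℝ (⊤ : ℕ∞) Y₀ → ContDiff ℝ (⊤ : ℕ∞) Y₁ →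
          ∀ m : E, dR11 ϖ X Y₀ Y₁ (m, m) = 0 := by
  constructor
  · intro htor X Y₀ Y₁ hX hY₀ hY₁ m
    rw [key_dR ϖ Ddag hDdag X Y₀ Y₁ hX hY₀ hY₁ m, htor Y₀ Y₁ hY₀ hY₁ m]
    simp
  · intro hdR X Y hX hY m
    apply hnd
    intro w
    have h := hdR (fun _ => w) X Y contDiff_const hX hY m
    rw [key_dR ϖ Ddag hDdag (fun _ => w) X Y contDiff_const hX hY m] at h
    have : gOf ϖ m w (tor Ddag X Y m) = 0 := h
    rw [hsymm] at this
    exact this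
end
end

section
/- If a contrast bi-form ϖ is left-exact, i.e. ϖ = d^L S for some (0,1)-bi-form S, then the induced connection ∇^ϖ is torsion-free (so (M, g^ϖ, ∇^ϖ) is a statistical manifold admitting torsion in the dual). -/
/-!
We model the manifold `M` as a (chart-free) normed space `E`; vector fields are maps
`E → E` and a `(1,1)`-bi-form on `M` is given pointwise: at `(m,n) ∈ M × M` it pairs a
tangent vector at `m` (left slot) with a tangent vector at `n` (right slot).
-/

noncomputable section

variable {E : Type*} [NormedAddCommGroup E] [NormedSpace ℝ E]

/-- The left differential of a `(0,1)`-bi-form `S` (given pointwise, at `(m,n)` a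
covector in the right tangent space): `(d^L S)(X|Y) = L_{(X,0)}(S(·|Y))`, as a
pointwise `(1,1)`-bi-form. -/
def dLS (S : E × E → E →L[ℝ] ℝ) : BiForm11 E :=
  fun z => fderiv ℝ (fun a => S (a, z.2)) z.1

/-- if a contrast bi-form `ϖ` is left-exact, `ϖ = d^L S` for a
`(0,1)`-bi-form `S`, then the induced connection `∇^ϖ` is torsion-free (so
`(M, g^ϖ, ∇^ϖ)` is a statistical manifold admitting torsion in the dual). -/
theorem stmt7 (S : E × E → E →L[ℝ] ℝ) (hS : ContDiff ℝ (⊤ : ℕ∞) S)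
    (hsymm : ∀ (m : E) (v w : E), gOf (dLS S) m v w = gOf (dLS S) m w v)
    (hnd : ∀ (m : E) (v : E), (∀ w, gOf (dLS S) m v w = 0) → v = 0)
    (D : (E → E) → (E → E) → E → E) (hD : Induces (dLS S) D) :
    ∀ X Y : E → E, ContDiff ℝ (⊤ : ℕ∞) X → ContDiff ℝ (⊤ : ℕ∞) Y → ∀ m, tor D X Y m = 0 := by
  intro X Y hX hY m
  apply hnd m
  intro w
  -- the scalar function T z = S z w on E × E
  have hT : ContDiff ℝ (⊤ : ℕ∞) (fun z : E × E => S z w) := hS.clm_apply contDiff_const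
  set T : E × E → ℝ := fun z => S z w with hTdef
  have hT' : ContDiff ℝ (⊤ : ℕ∞) (fderiv ℝ T) := hT.fderiv_right (by simp)
  -- Key pointwise identity: dLS S z v w = fderiv T z (v, 0)
  have L1 : ∀ (a b v : E), dLS S (a, b) v w = fderiv ℝ T (a, b) (v, 0) := by
    intro a b v
    have h1 : HasFDerivAt (fun x => S (x, b))
        ((fderiv ℝ S (a, b)).comp (ContinuousLinearMap.inl ℝ E E)) a :=
      ((hS.differentiable (by simp) (a, b)).hasFDerivAt).comp a (hasFDerivAt_prodMk_left a b)
    have h2 : HasFDerivAt T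
        ((ContinuousLinearMap.apply ℝ ℝ w).comp (fderiv ℝ S (a, b))) (a, b) :=
      ((ContinuousLinearMap.apply ℝ ℝ w).hasFDerivAt).comp (a, b)
        (hS.differentiable (by simp) (a, b)).hasFDerivAt
    rw [show dLS S (a, b) v w = fderiv ℝ (fun x => S (x, b)) a v w from rfl,
      h1.fderiv, h2.fderiv]
    rfl
  have hpair : ∀ V : E → E, pair (dLS S) V (fun _ => w)
      = fun z : E × E => fderiv ℝ T z (V z.1, 0) := by
    intro V
    funext z
    show dLS S z (V z.1) w = _
    rw [show z = (z.1, z.2) from rfl, L1 z.1 z.2 (V z.1)]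
  -- Derivative of the paired quantity along (u, 0) at the diagonal
  have L2 : ∀ V : E → E, ContDiff ℝ (⊤ : ℕ∞) V → ∀ u : E,
      fderiv ℝ (pair (dLS S) V (fun _ => w)) (m, m) (u, 0)
        = fderiv ℝ T (m, m) (fderiv ℝ V m u, 0)
          + fderiv ℝ (fderiv ℝ T) (m, m) (u, 0) (V m, 0) := by
    intro V hV u
    rw [hpair V]
    have hc : HasFDerivAt (fderiv ℝ T) (fderiv ℝ (fderiv ℝ T) (m, m)) (m, m) :=
      (hT'.differentiable (by simp) (m, m)).hasFDerivAt
    have hu : HasFDerivAt (fun z : E × E => (V z.1, (0 : E)))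
        (((fderiv ℝ V m).comp (ContinuousLinearMap.fst ℝ E E)).prod 0) (m, m) :=
      ((hV.differentiable (by simp) m).hasFDerivAt.comp (m, m) hasFDerivAt_fst).prodMk
        (hasFDerivAt_const 0 (m, m))
    rw [(hc.clm_apply hu).fderiv]
    simp
  -- symmetry of the second derivative of T
  have hsym2 : fderiv ℝ (fderiv ℝ T) (m, m) (X m, 0) (Y m, 0)
      = fderiv ℝ (fderiv ℝ T) (m, m) (Y m, 0) (X m, 0) :=
    second_derivative_symmetric (fun z => (hT.differentiable (by simp) z).hasFDerivAt)
      ((hT'.differentiable (by simp) (m, m)).hasFDerivAt) _ _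
  have e1 := hD X Y (fun _ => w) hY contDiff_const m
  have e2 := hD Y X (fun _ => w) hX contDiff_const m
  rw [L2 Y hY (X m)] at e1
  rw [L2 X hX (Y m)] at e2
  have e3 : gOf (dLS S) m (lieBr X Y m) w
      = fderiv ℝ T (m, m) (fderiv ℝ Y m (X m), 0)
        - fderiv ℝ T (m, m) (fderiv ℝ X m (Y m), 0) := by
    rw [show gOf (dLS S) m (lieBr X Y m) w = dLS S (m, m) (lieBr X Y m) w from rfl,
      L1 m m (lieBr X Y m)]
    have : ((fderiv ℝ Y m (X m) - fderiv ℝ X m (Y m), (0 : E)) : E × E)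
        = (fderiv ℝ Y m (X m), 0) - (fderiv ℝ X m (Y m), 0) := by simp
    rw [lieBr, this, map_sub]
  have : gOf (dLS S) m (tor D X Y m) w
      = gOf (dLS S) m (D X Y m) w - gOf (dLS S) m (D Y X m) w
        - gOf (dLS S) m (lieBr X Y m) w := by
    rw [tor, map_sub, map_sub]
    simp
  rw [this, e1, e2, e3, hsym2]
  ring
end
end

section
/- If a contrast bi-form ϖ is bi-exact, i.e. ϖ = d^L d^R F for a smooth function F on M × M, then both the induced connection ∇^ϖ and its dual ∇^{ϖ†} are torsion-free. -/
/-!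
We model the manifold `M` as a (chart-free) normed space `E`; vector fields are maps
`E → E` and a `(1,1)`-bi-form on `M` is given pointwise: at `(m,n) ∈ M × M` it pairs a
tangent vector at `m` (left slot) with a tangent vector at `n` (right slot).
-/

noncomputable section

variable {E : Type*} [NormedAddCommGroup E] [NormedSpace ℝ E]

/-- The bi-exact `(1,1)`-bi-form `ϖ = d^L d^R F` of a smooth function `F` on `M × M`,
given pointwise by the second mixed derivative `(X,0)((0,Y)F)`. -/
def ddF (F : E × E → ℝ) : BiForm11 E :=
  fun z => fderiv ℝ (fun a => fderiv ℝ (fun b => F (a, b)) z.2) z.1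

open ContinuousLinearMap in
private lemma stmt8.partR (F : E × E → ℝ) (hF : ContDiff ℝ (⊤ : ℕ∞) F) (a y : E) :
    fderiv ℝ (fun b => F (a, b)) y = (fderiv ℝ F (a, y)).comp (inr ℝ E E) :=
  (((hF.differentiable (by simp) (a, y)).hasFDerivAt.comp y
    (hasFDerivAt_prodMk_right a y))).fderiv

open ContinuousLinearMap in
/-- `ddF F` is the restriction of the full second derivative of `F`. -/
private lemma stmt8.ddF_eq (F : E × E → ℝ) (hF : ContDiff ℝ (⊤ : ℕ∞) F) (z : E × E) (v w : E) :
    ddF F z v w = fderiv ℝ (fderiv ℝ F) z (v, 0) (0, w) := by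
  have hΦ : ContDiff ℝ (⊤ : ℕ∞) (fderiv ℝ F) := hF.fderiv_right (by simp)
  have hfun : (fun a => fderiv ℝ (fun b => F (a, b)) z.2)
      = (fun L : (E × E) →L[ℝ] ℝ => L.comp (inr ℝ E E)) ∘ (fderiv ℝ F) ∘ (fun a => (a, z.2)) := by
    funext a; exact stmt8.partR F hF a z.2
  have hc : HasFDerivAt (fun a : E => fderiv ℝ (fun b => F (a, b)) z.2)
      ((((compL ℝ E (E × E) ℝ).flip (inr ℝ E E)).comp
        (fderiv ℝ (fderiv ℝ F) (z.1, z.2))).comp (inl ℝ E E)) z.1 := by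
    rw [hfun]
    exact ((((compL ℝ E (E × E) ℝ).flip (inr ℝ E E)).hasFDerivAt.comp (z.1, z.2)
      ((hΦ.differentiable (by simp) (z.1, z.2)).hasFDerivAt)).comp (f := fun a => (a, z.2)) z.1
      (hasFDerivAt_prodMk_left z.1 z.2) : )
  simp only [ddF, hc.fderiv]
  simp

open ContinuousLinearMap in
/-- product/application rule: variable in middle slot, constant in last slot. -/
private lemma stmt8.clm2_fderiv {Φf : E × E → (E × E) →L[ℝ] (E × E) →L[ℝ] ℝ}
    {u : E × E → E × E} {u' : E × E →L[ℝ] E × E} {p : E × E}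
    (hΦf : DifferentiableAt ℝ Φf p) (hu : HasFDerivAt u u' p) (c d : E × E) :
    fderiv ℝ (fun z => Φf z (u z) c) p d
      = Φf p (u' d) c + fderiv ℝ Φf p d (u p) c := by
  have hG : DifferentiableAt ℝ (fun z => Φf z (u z)) p :=
    hΦf.clm_apply hu.differentiableAt
  have h1 : fderiv ℝ (fun z => Φf z (u z)) p
      = (Φf p).comp u' + (fderiv ℝ Φf p).flip (u p) :=
    (fderiv_clm_apply hΦf hu.differentiableAt).trans (by rw [hu.fderiv])
  have h2 : fderiv ℝ (fun z => (fun z => Φf z (u z)) z ((fun _ => c) z)) p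
      = ((fun z => Φf z (u z)) p).comp (fderiv ℝ (fun _ => c) p)
        + (fderiv ℝ (fun z => Φf z (u z)) p).flip c :=
    fderiv_clm_apply hG (differentiableAt_const c)
  simp only [fderiv_fun_const, Pi.zero_apply, comp_zero, zero_add] at h2
  have h3 := congrArg (fun L => L d) h2
  rw [h3, h1]
  simp

open ContinuousLinearMap in
/-- product/application rule: constant in middle slot, variable in last slot. -/
private lemma stmt8.clm2_fderiv' {Φf : E × E → (E × E) →L[ℝ] (E × E) →L[ℝ] ℝ}
    {u : E × E → E × E} {u' : E × E →L[ℝ] E × E} {p : E × E}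
    (hΦf : DifferentiableAt ℝ Φf p) (hu : HasFDerivAt u u' p) (c d : E × E) :
    fderiv ℝ (fun z => Φf z c (u z)) p d
      = Φf p c (u' d) + fderiv ℝ Φf p d c (u p) := by
  have hGc : DifferentiableAt ℝ (fun z => Φf z c) p := hΦf.clm_apply (differentiableAt_const c)
  have h1 : fderiv ℝ (fun z => Φf z c) p = (fderiv ℝ Φf p).flip c := by
    rw [fderiv_clm_apply hΦf (differentiableAt_const c)]
    simp
  have h2 : fderiv ℝ (fun z => (fun z => Φf z c) z (u z)) p
      = ((fun z => Φf z c) p).comp (fderiv ℝ u p)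
        + (fderiv ℝ (fun z => Φf z c) p).flip (u p) :=
    fderiv_clm_apply hGc hu.differentiableAt
  have h3 := congrArg (fun L => L d) h2
  simp only at h3
  rw [h3, h1, hu.fderiv]
  simp

/-- Schwarz symmetry of the second derivative of `F`. -/
private lemma stmt8.symmPhi {F : E × E → ℝ} (hF : ContDiff ℝ (⊤ : ℕ∞) F) (y b c : E × E) :
    fderiv ℝ (fderiv ℝ F) y b c = fderiv ℝ (fderiv ℝ F) y c b :=
  (hF.contDiffAt.isSymmSndFDerivAt (by rw [minSmoothness_of_isRCLikeNormedField]; exact WithTop.coe_le_coe.mpr (le_top : (2 : ℕ∞) ≤ ⊤))) b c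

/-- symmetry of the third derivative of `F` in its first two slots. -/
private lemma stmt8.symmPsi12 {F : E × E → ℝ} (hF : ContDiff ℝ (⊤ : ℕ∞) F) (z a b c : E × E) :
    fderiv ℝ (fderiv ℝ (fderiv ℝ F)) z a b c
      = fderiv ℝ (fderiv ℝ (fderiv ℝ F)) z b a c := by
  have h := ((hF.fderiv_right (m := ((⊤ : ℕ∞) : WithTop ℕ∞)) (by simp)).contDiffAt (x := z)).isSymmSndFDerivAt (by rw [minSmoothness_of_isRCLikeNormedField]; exact WithTop.coe_le_coe.mpr (le_top : (2 : ℕ∞) ≤ ⊤)) a b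
  exact congrArg (fun L => L c) h

/-- evaluated form of the third derivative. -/
private lemma stmt8.psi_eval {F : E × E → ℝ} (hF : ContDiff ℝ (⊤ : ℕ∞) F) (z a b c : E × E) :
    fderiv ℝ (fun y => fderiv ℝ (fderiv ℝ F) y b c) z a
      = fderiv ℝ (fderiv ℝ (fderiv ℝ F)) z a b c := by
  have hΦ : ContDiff ℝ (⊤ : ℕ∞) (fderiv ℝ (fderiv ℝ F)) :=
    (hF.fderiv_right (m := ((⊤ : ℕ∞) : WithTop ℕ∞)) (by simp)).fderiv_right (by simp)
  have h := stmt8.clm2_fderiv (u := fun _ => b)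
    (hΦ.differentiable (by simp) z) (hasFDerivAt_const b z) c a
  simpa using h

/-- symmetry of the third derivative of `F` in its last two slots. -/
private lemma stmt8.symmPsi23 {F : E × E → ℝ} (hF : ContDiff ℝ (⊤ : ℕ∞) F) (z a b c : E × E) :
    fderiv ℝ (fderiv ℝ (fderiv ℝ F)) z a b c
      = fderiv ℝ (fderiv ℝ (fderiv ℝ F)) z a c b := by
  rw [← stmt8.psi_eval hF z a b c, ← stmt8.psi_eval hF z a c b]
  have he : (fun y => fderiv ℝ (fderiv ℝ F) y b c) = fun y => fderiv ℝ (fderiv ℝ F) y c b :=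
    funext fun y => stmt8.symmPhi hF y b c
  rw [he]
open ContinuousLinearMap in
private lemma stmt8.pairD {F : E × E → ℝ} (hF : ContDiff ℝ (⊤ : ℕ∞) F)
    {X : E → E} (hX : ContDiff ℝ (⊤ : ℕ∞) X) (w m v : E) :
    fderiv ℝ (pair (ddF F) X (fun _ => w)) (m, m) (v, 0)
      = fderiv ℝ (fderiv ℝ F) (m, m) (fderiv ℝ X m v, 0) (0, w)
        + fderiv ℝ (fderiv ℝ (fderiv ℝ F)) (m, m) (v, 0) (X m, 0) (0, w) := by
  have hΦ : ContDiff ℝ (⊤ : ℕ∞) (fderiv ℝ (fderiv ℝ F)) :=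
    (hF.fderiv_right (m := ((⊤ : ℕ∞) : WithTop ℕ∞)) (by simp)).fderiv_right (by simp)
  have hfun : pair (ddF F) X (fun _ => w)
      = fun z => fderiv ℝ (fderiv ℝ F) z (X z.1, 0) (0, w) := by
    funext z; exact stmt8.ddF_eq F hF z (X z.1) w
  have hu : HasFDerivAt (fun z : E × E => (X z.1, (0 : E)))
      (((fderiv ℝ X m).comp (fst ℝ E E)).prod 0) (m, m) :=
    ((hX.differentiable (by simp) m).hasFDerivAt.comp (m, m) hasFDerivAt_fst).prodMk
      (hasFDerivAt_const 0 (m, m))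
  rw [hfun]
  have h := stmt8.clm2_fderiv (hΦ.differentiable (by simp) (m, m))
    hu ((0 : E), w) (v, (0 : E))
  rw [h]
  simp [add_comm]

open ContinuousLinearMap in
private lemma stmt8.pairDdag {F : E × E → ℝ} (hF : ContDiff ℝ (⊤ : ℕ∞) F)
    {X : E → E} (hX : ContDiff ℝ (⊤ : ℕ∞) X) (w m v : E) :
    fderiv ℝ (pair (sStar (ddF F)) X (fun _ => w)) (m, m) (v, 0)
      = fderiv ℝ (fderiv ℝ F) (m, m) (w, 0) (0, fderiv ℝ X m v)
        + fderiv ℝ (fderiv ℝ (fderiv ℝ F)) (m, m) (0, v) (w, 0) (0, X m) := by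
  have hΦ : ContDiff ℝ (⊤ : ℕ∞) (fderiv ℝ (fderiv ℝ F)) :=
    (hF.fderiv_right (m := ((⊤ : ℕ∞) : WithTop ℕ∞)) (by simp)).fderiv_right (by simp)
  have hfun : pair (sStar (ddF F)) X (fun _ => w)
      = fun z => (fun y : E × E => fderiv ℝ (fderiv ℝ F) (y.2, y.1)) z (w, (0 : E))
          ((fun y : E × E => ((0 : E), X y.1)) z) := by
    funext z
    simp only [pair, sStar, flip_apply]
    exact stmt8.ddF_eq F hF (z.2, z.1) w (X z.1)
  have hσ : HasFDerivAt (fun z : E × E => (z.2, z.1)) ((snd ℝ E E).prod (fst ℝ E E))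
      ((m, m) : E × E) := hasFDerivAt_snd.prodMk hasFDerivAt_fst
  have hΦf : HasFDerivAt (fun y : E × E => fderiv ℝ (fderiv ℝ F) (y.2, y.1))
      ((fderiv ℝ (fderiv ℝ (fderiv ℝ F)) (m, m)).comp ((snd ℝ E E).prod (fst ℝ E E)))
      ((m, m) : E × E) :=
    ((hΦ.differentiable (by simp) (m, m)).hasFDerivAt).comp (f := fun z : E × E => (z.2, z.1)) (m, m) hσ
  have hu : HasFDerivAt (fun z : E × E => ((0 : E), X z.1))
      ((0 : E × E →L[ℝ] E).prod ((fderiv ℝ X m).comp (fst ℝ E E))) (m, m) :=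
    (hasFDerivAt_const 0 (m, m)).prodMk
      ((hX.differentiable (by simp) m).hasFDerivAt.comp (m, m) hasFDerivAt_fst)
  rw [hfun]
  have h := stmt8.clm2_fderiv' hΦf.differentiableAt hu (w, (0 : E)) (v, (0 : E))
  rw [h, hΦf.fderiv]
  simp

/-- if a contrast bi-form `ϖ` is bi-exact, `ϖ = d^L d^R F` for a
smooth function `F` on `M × M`, then both the induced connection `∇^ϖ` and its dual
`∇^{ϖ†}` (induced by `s^*ϖ`) are torsion-free. -/
theorem stmt8 (F : E × E → ℝ) (hF : ContDiff ℝ (⊤ : ℕ∞) F)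
    (hsymm : ∀ (m : E) (v w : E), gOf (ddF F) m v w = gOf (ddF F) m w v)
    (hnd : ∀ (m : E) (v : E), (∀ w, gOf (ddF F) m v w = 0) → v = 0)
    (D Ddag : (E → E) → (E → E) → E → E)
    (hD : Induces (ddF F) D) (hDdag : Induces (sStar (ddF F)) Ddag) :
    (∀ X Y : E → E, ContDiff ℝ (⊤ : ℕ∞) X → ContDiff ℝ (⊤ : ℕ∞) Y → ∀ m, tor D X Y m = 0)
      ∧ ∀ X Y : E → E, ContDiff ℝ (⊤ : ℕ∞) X → ContDiff ℝ (⊤ : ℕ∞) Y → ∀ m, tor Ddag X Y m = 0 := by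
  constructor
  · intro X Y hX hY m
    apply hnd m
    intro w
    have hg : ∀ v : E, gOf (ddF F) m v w = fderiv ℝ (fderiv ℝ F) (m, m) (v, 0) (0, w) :=
      fun v => stmt8.ddF_eq F hF (m, m) v w
    have e1 : gOf (ddF F) m (tor D X Y m) w
        = gOf (ddF F) m (D X Y m) w - gOf (ddF F) m (D Y X m) w
          - gOf (ddF F) m (lieBr X Y m) w := by
      simp only [tor, map_sub, ContinuousLinearMap.sub_apply]
    rw [e1, hD X Y (fun _ => w) hY contDiff_const m,
        hD Y X (fun _ => w) hX contDiff_const m,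
        stmt8.pairD hF hY w m (X m), stmt8.pairD hF hX w m (Y m),
        hg (lieBr X Y m)]
    have hlb : fderiv ℝ (fderiv ℝ F) (m, m) (lieBr X Y m, 0) (0, w)
        = fderiv ℝ (fderiv ℝ F) (m, m) (fderiv ℝ Y m (X m), 0) (0, w)
          - fderiv ℝ (fderiv ℝ F) (m, m) (fderiv ℝ X m (Y m), 0) (0, w) := by
      have hp : ((lieBr X Y m, (0 : E)) : E × E)
          = (fderiv ℝ Y m (X m), 0) - (fderiv ℝ X m (Y m), 0) := by
        simp [lieBr, Prod.ext_iff]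
      rw [hp, map_sub, ContinuousLinearMap.sub_apply]
    rw [hlb, stmt8.symmPsi12 hF (m, m) (X m, 0) (Y m, 0) ((0 : E), w)]
    ring
  · intro X Y hX hY m
    apply hnd m
    intro w
    have hflip : ∀ v w : E, gOf (sStar (ddF F)) m v w = gOf (ddF F) m v w := by
      intro v w
      simp only [gOf, sStar, ContinuousLinearMap.flip_apply]
      exact hsymm m w v
    rw [← hflip (tor Ddag X Y m) w]
    have hg : ∀ v : E, gOf (sStar (ddF F)) m v w
        = fderiv ℝ (fderiv ℝ F) (m, m) (w, 0) (0, v) := by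
      intro v
      simp only [gOf, sStar, ContinuousLinearMap.flip_apply]
      exact stmt8.ddF_eq F hF (m, m) w v
    have e1 : gOf (sStar (ddF F)) m (tor Ddag X Y m) w
        = gOf (sStar (ddF F)) m (Ddag X Y m) w - gOf (sStar (ddF F)) m (Ddag Y X m) w
          - gOf (sStar (ddF F)) m (lieBr X Y m) w := by
      simp only [tor, map_sub, ContinuousLinearMap.sub_apply]
    rw [e1, hDdag X Y (fun _ => w) hY contDiff_const m,
        hDdag Y X (fun _ => w) hX contDiff_const m,
        stmt8.pairDdag hF hY w m (X m), stmt8.pairDdag hF hX w m (Y m),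
        hg (lieBr X Y m)]
    have hlb : fderiv ℝ (fderiv ℝ F) (m, m) (w, 0) (0, lieBr X Y m)
        = fderiv ℝ (fderiv ℝ F) (m, m) (w, 0) (0, fderiv ℝ Y m (X m))
          - fderiv ℝ (fderiv ℝ F) (m, m) (w, 0) (0, fderiv ℝ X m (Y m)) := by
      have hp : (((0 : E), lieBr X Y m) : E × E)
          = (0, fderiv ℝ Y m (X m)) - (0, fderiv ℝ X m (Y m)) := by
        simp [lieBr, Prod.ext_iff]
      rw [hp, map_sub]
    have hsym : fderiv ℝ (fderiv ℝ (fderiv ℝ F)) (m, m) (0, X m) (w, 0) (0, Y m)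
        = fderiv ℝ (fderiv ℝ (fderiv ℝ F)) (m, m) (0, Y m) (w, 0) (0, X m) := by
      rw [stmt8.symmPsi12 hF (m, m) ((0 : E), X m) (w, 0) ((0 : E), Y m),
          stmt8.symmPsi23 hF (m, m) (w, 0) ((0 : E), X m) ((0 : E), Y m),
          stmt8.symmPsi12 hF (m, m) (w, 0) ((0 : E), Y m) ((0 : E), X m)]
    rw [hlb, hsym]
    ring
end
end

section
/- In the teleparallel setting, the contrast bi-form ϖ = Σ_j π_L^*(α^j) ⊗ π_R^*(β^j) solves the inverse problem: ι^* ϖ = g and the induced connection ∇^ϖ equals the teleparallel connection ∇ of the frame {α^j}. -/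
/-!
We model the manifold `M` as a (chart-free) finite-dimensional normed space `E`;
vector fields are maps `E → E`, `1`-forms are maps `E → E →L[ℝ] ℝ`, and a global
co-frame of `T^∨M` is a family of `1`-forms indexed by `Fin (dim M)` which is
pointwise a basis of the cotangent space.
-/

noncomputable section

variable {E : Type*} [NormedAddCommGroup E] [NormedSpace ℝ E] [FiniteDimensional ℝ E]

/-- `D` is an affine connection: additive in both slots, `C^∞(M)`-linear in the first
slot and satisfying the Leibniz rule in the second slot. -/
structure IsAffineConnection (D : (E → E) → (E → E) → E → E) : Prop where
  addX : ∀ X X' Y, D (X + X') Y = D X Y + D X' Y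
  addY : ∀ X Y Y', ContDiff ℝ (⊤ : ℕ∞) Y → ContDiff ℝ (⊤ : ℕ∞) Y' → D X (Y + Y') = D X Y + D X Y'
  smulX : ∀ (f : E → ℝ) (X Y : E → E), D (fun m => f m • X m) Y = fun m => f m • D X Y m
  leibniz : ∀ (f : E → ℝ) (X Y : E → E), ContDiff ℝ (⊤ : ℕ∞) f → ContDiff ℝ (⊤ : ℕ∞) Y →
    D X (fun m => f m • Y m) = fun m => f m • D X Y m + fderiv ℝ f m (X m) • Y m

/-- `D` is teleparallel with respect to the co-frame `α`, i.e. every `α j` is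
`D`-covariantly constant: `(∇_X α^j)(Y) = X(α^j(Y)) − α^j(∇_X Y) = 0`. -/
def Teleparallel (α : Fin (Module.finrank ℝ E) → E → E →L[ℝ] ℝ)
    (D : (E → E) → (E → E) → E → E) : Prop :=
  ∀ (j : Fin (Module.finrank ℝ E)) (X Y : E → E) (m : E),
    fderiv ℝ (fun x => α j x (Y x)) m (X m) = α j m (D X Y m)

/-- in the teleparallel setting, the contrast bi-form
`ϖ = Σ_j π_L^*(α^j) ⊗ π_R^*(β^j)` solves the inverse problem: `ι^*ϖ = g` and the
connection it induces (via `g(∇^ϖ_Z X, Y) = ι^*(L_{(Z,0)}(ϖ(X|Y)))`) is the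
teleparallel connection `∇` of the frame `{α^j}`. -/
theorem stmt13 (g : E → E →L[ℝ] E →L[ℝ] ℝ) (hg : ContDiff ℝ (⊤ : ℕ∞) g)
    (hsymm : ∀ (m : E) (v w : E), g m v w = g m w v)
    (hnd : ∀ (m : E) (v : E), (∀ w, g m v w = 0) → v = 0)
    (α : Fin (Module.finrank ℝ E) → E → E →L[ℝ] ℝ)
    (hα : ∀ j, ContDiff ℝ (⊤ : ℕ∞) (α j))
    (hframe : ∀ (m : E) (v : E), (∀ j, α j m v = 0) → v = 0)
    (Zv : Fin (Module.finrank ℝ E) → E → E)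
    (hZgrad : ∀ (j : Fin (Module.finrank ℝ E)) (m : E) (w : E), g m (Zv j m) w = α j m w)
    (β : Fin (Module.finrank ℝ E) → E → E →L[ℝ] ℝ)
    (hβ : ∀ i, ContDiff ℝ (⊤ : ℕ∞) (β i))
    (hdualframe : ∀ (m : E) (i j : Fin (Module.finrank ℝ E)),
      β i m (Zv j m) = if i = j then (1 : ℝ) else 0)
    (D : (E → E) → (E → E) → E → E) (hTele : Teleparallel α D) :
    (∀ (m : E) (v w : E), (∑ j, α j m v * β j m w) = g m v w)
      ∧ ∀ Z X Y : E → E, ContDiff ℝ (⊤ : ℕ∞) X → ContDiff ℝ (⊤ : ℕ∞) Y → ∀ m : E,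
          fderiv ℝ (fun z : E × E => ∑ j, α j z.1 (X z.1) * β j z.2 (Y z.2))
              (m, m) (Z m, 0)
            = g m (D Z X m) (Y m) := by
  have part1 : ∀ (m : E) (v w : E), (∑ j, α j m v * β j m w) = g m v w := by
    intro m v w
    have hli : LinearIndependent ℝ (fun j => Zv j m) := by
      rw [Fintype.linearIndependent_iff]
      intro c hc i
      have h := congrArg (β i m) hc
      simpa [map_sum, map_smul, hdualframe, mul_ite, Finset.sum_ite_eq'] using h
    let b : Module.Basis (Fin (Module.finrank ℝ E)) ℝ E :=
      Module.Basis.mk hli (hli.span_eq_top_of_card_eq_finrank' (Fintype.card_fin _)).ge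
    have hb : ∀ i, b i = Zv i m := fun i => by simp [b]
    have hmaps : ((∑ j, (α j m v) • β j m : E →L[ℝ] ℝ) : E →ₗ[ℝ] ℝ)
        = ((g m v : E →L[ℝ] ℝ) : E →ₗ[ℝ] ℝ) := by
      apply b.ext
      intro i
      simp only [ContinuousLinearMap.coe_coe, hb]
      rw [ContinuousLinearMap.sum_apply]
      simp only [ContinuousLinearMap.smul_apply, hdualframe, smul_eq_mul, mul_ite,
        mul_one, mul_zero]
      rw [Finset.sum_ite_eq' Finset.univ i (fun j => α j m v)]
      simp [hsymm m v (Zv i m), hZgrad]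
    have h2 := LinearMap.congr_fun hmaps w
    simpa [ContinuousLinearMap.sum_apply] using h2
  refine ⟨part1, ?_⟩
  intro Z X Y hX hY m
  have hfd : ∀ j, HasFDerivAt (fun x => α j x (X x))
      (fderiv ℝ (fun x => α j x (X x)) m) m :=
    fun j => (((hα j).clm_apply hX).differentiable (by simp) m).hasFDerivAt
  have hhd : ∀ j, HasFDerivAt (fun x => β j x (Y x))
      (fderiv ℝ (fun x => β j x (Y x)) m) m :=
    fun j => (((hβ j).clm_apply hY).differentiable (by simp) m).hasFDerivAt
  have H : HasFDerivAt (fun z : E × E => ∑ j, α j z.1 (X z.1) * β j z.2 (Y z.2))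
      (∑ j, ((α j m (X m)) •
          ((fderiv ℝ (fun x => β j x (Y x)) m).comp (ContinuousLinearMap.snd ℝ E E))
        + (β j m (Y m)) •
          ((fderiv ℝ (fun x => α j x (X x)) m).comp (ContinuousLinearMap.fst ℝ E E))))
      (m, m) := by
    apply HasFDerivAt.fun_sum
    intro j _
    have h1 : HasFDerivAt (fun z : E × E => α j z.1 (X z.1))
        ((fderiv ℝ (fun x => α j x (X x)) m).comp (ContinuousLinearMap.fst ℝ E E)) (m, m) :=
      HasFDerivAt.comp (m, m) (f := Prod.fst) (hfd j) hasFDerivAt_fst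
    have h2 : HasFDerivAt (fun z : E × E => β j z.2 (Y z.2))
        ((fderiv ℝ (fun x => β j x (Y x)) m).comp (ContinuousLinearMap.snd ℝ E E)) (m, m) :=
      HasFDerivAt.comp (m, m) (f := Prod.snd) (hhd j) hasFDerivAt_snd
    exact h1.mul h2
  rw [H.fderiv]
  rw [ContinuousLinearMap.sum_apply]
  have hterm : ∀ j, ((α j m (X m)) •
          ((fderiv ℝ (fun x => β j x (Y x)) m).comp (ContinuousLinearMap.snd ℝ E E))
        + (β j m (Y m)) •
          ((fderiv ℝ (fun x => α j x (X x)) m).comp (ContinuousLinearMap.fst ℝ E E)))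
        ((Z m, 0) : E × E) = α j m (D Z X m) * β j m (Y m) := by
    intro j
    simp only [ContinuousLinearMap.add_apply, ContinuousLinearMap.smul_apply,
      ContinuousLinearMap.coe_comp', Function.comp_apply, ContinuousLinearMap.coe_snd',
      ContinuousLinearMap.coe_fst', map_zero, smul_eq_mul, mul_zero, zero_add]
    rw [hTele j Z X m]
    ring
  rw [Finset.sum_congr rfl (fun j _ => hterm j)]
  exact part1 m (D Z X m) (Y m)
end
end

section
/- Duality of induced connections: for a contrast bi-form ϖ with g^ϖ symmetric, the connections ∇^ϖ and ∇^{ϖ†} (induced by ϖ and s^* ϖ) are g^ϖ-conjugate: Z(g^ϖ(X,Y)) = g^ϖ(∇^ϖ_Z X, Y) + g^ϖ(X, ∇^{ϖ†}_Z Y) for all vector fields X, Y, Z on M. -/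
/-!
We model the manifold `M` as a (chart-free) normed space `E`; vector fields are maps
`E → E` and a `(1,1)`-bi-form on `M` is given pointwise: at `(m,n) ∈ M × M` it pairs a
tangent vector at `m` (left slot) with a tangent vector at `n` (right slot).
-/

noncomputable section

variable {E : Type*} [NormedAddCommGroup E] [NormedSpace ℝ E]

/-- duality of induced connections. For a contrast bi-form `ϖ` with
`g^ϖ` symmetric, the connections `∇^ϖ` and `∇^{ϖ†}` (induced by `ϖ` and `s^*ϖ`) are
`g^ϖ`-conjugate: `Z(g^ϖ(X,Y)) = g^ϖ(∇^ϖ_Z X, Y) + g^ϖ(X, ∇^{ϖ†}_Z Y)`. -/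
theorem stmt17 (ϖ : BiForm11 E) (hϖ : ContDiff ℝ (⊤ : ℕ∞) ϖ)
    (hsymm : ∀ (m : E) (v w : E), gOf ϖ m v w = gOf ϖ m w v)
    (hnd : ∀ (m : E) (v : E), (∀ w, gOf ϖ m v w = 0) → v = 0)
    (D Ddag : (E → E) → (E → E) → E → E)
    (hD : Induces ϖ D) (hDdag : Induces (sStar ϖ) Ddag) :
    ∀ X Y Z : E → E, ContDiff ℝ (⊤ : ℕ∞) X → ContDiff ℝ (⊤ : ℕ∞) Y → ContDiff ℝ (⊤ : ℕ∞) Z →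
      ∀ m : E,
        fderiv ℝ (fun x => gOf ϖ x (X x) (Y x)) m (Z m)
          = gOf ϖ m (D Z X m) (Y m) + gOf ϖ m (X m) (Ddag Z Y m) := by
  intro X Y Z hX hY hZ m
  set F := pair ϖ X Y with hFdef
  have hF : ContDiff ℝ (⊤ : ℕ∞) F := by
    apply ContDiff.clm_apply
    · exact hϖ.clm_apply (hX.comp contDiff_fst)
    · exact hY.comp contDiff_snd
  have hFd : Differentiable ℝ F := hF.differentiable (by simp)
  have hcomp : (fun x => gOf ϖ x (X x) (Y x))
      = F ∘ ⇑((ContinuousLinearMap.id ℝ E).prod (ContinuousLinearMap.id ℝ E)) := rfl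
  have hLHS : fderiv ℝ (fun x => gOf ϖ x (X x) (Y x)) m (Z m)
      = fderiv ℝ F (m, m) (Z m, Z m) := by
    rw [hcomp, fderiv_comp m (hFd _)
      (((ContinuousLinearMap.id ℝ E).prod (ContinuousLinearMap.id ℝ E)).differentiableAt),
      ContinuousLinearMap.fderiv]
    rfl
  have hsplit : fderiv ℝ F (m, m) (Z m, Z m)
      = fderiv ℝ F (m, m) (Z m, 0) + fderiv ℝ F (m, m) (0, Z m) := by
    rw [← ContinuousLinearMap.map_add]
    norm_num
  have hswap : pair (sStar ϖ) Y X
      = F ∘ ⇑((ContinuousLinearMap.snd ℝ E E).prod (ContinuousLinearMap.fst ℝ E E)) := rfl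
  have hR : fderiv ℝ (pair (sStar ϖ) Y X) (m, m) (Z m, 0) = fderiv ℝ F (m, m) (0, Z m) := by
    rw [hswap, fderiv_comp _ (hFd _)
      (((ContinuousLinearMap.snd ℝ E E).prod (ContinuousLinearMap.fst ℝ E E)).differentiableAt),
      ContinuousLinearMap.fderiv]
    rfl
  have hDterm := hD Z X Y hX hY m
  have hDdagterm := hDdag Z Y X hY hX m
  have hg : gOf ϖ m (X m) (Ddag Z Y m) = gOf (sStar ϖ) m (Ddag Z Y m) (X m) := rfl
  rw [hLHS, hsplit, hDterm, hg, hDdagterm, hR]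
end
end
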